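/- Let Π be a family of deterministic stopping policies (functions List O → Bool) whose VC dimension, as Boolean classifiers on List O, is at most d, with d ≥ 1. Let x₁, …, xₙ be n full trajectories of horizon H with n·H ≥ d. Then the number of distinct stopping-time vectors { (τ_π(x₁), …, τ_π(xₙ)) : π ∈ Π } is at most (e·n·H/d)^d. -/

import Mathlib

open scoped BigOperators

/-- The `t`-prefix of a full trajectory `x : Fin H → O`, i.e. the list `[x 0, …, x (t-1)]`. -/
def trajPrefix {O : Type*} {H : ℕ} (x : Fin H → O) (t : ℕ) : List O :=
  (List.ofFn x).take t

open Classical in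
/-- The stopping time of policy `π` on full trajectory `x`: the least `t` with
`1 ≤ t ≤ H` such that `π` halts on the `t`-prefix of `x`, and `H` if no such `t` exists. -/
noncomputable def stopTime {O : Type*} (H : ℕ) (π : List O → Bool) (x : Fin H → O) : ℕ :=
  if h : ∃ t, (1 ≤ t ∧ t ≤ H) ∧ π (trajPrefix x t) = true then Nat.find h else H

/-- The return of policy `π` on full trajectory `x` under reward function `g`. -/
noncomputable def policyReturn {O : Type*} {H : ℕ} (g : List O → ℝ) (π : List O → Bool)
    (x : Fin H → O) : ℝ :=
  g (trajPrefix x (stopTime H π x))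

/-- A family `Π` of policies shatters a finite set `S` of lists if every Boolean
labeling of `S` is realized by some member of `Π`. -/
def ShattersLists {O : Type*} (P : Set (List O → Bool)) (S : Finset (List O)) : Prop :=
  ∀ f : List O → Bool, ∃ π ∈ P, ∀ l ∈ S, π l = f l


/-!
The stopping times of a policy on `x₁, …, xₙ` only depend on its values on the at most `n * H`
prefixes `trajPrefix (x i) t`, `1 ≤ t ≤ H`, so there are at most as many stopping-time vectors as
traces of `Π` on this set `S`. By the Sauer–Shelah lemma there are at most
`∑ k ≤ d, (n * H).choose k` such traces, and `∑ k ≤ d, m.choose k ≤ (d / m)⁻ᵈ (1 + d / m)ᵐ ≤ (e m / d)ᵈ`.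
-/

open Finset

lemma sum_choose_le_exp_one_mul_div_pow {m d : ℕ} (hdm : d ≤ m) :
    ∑ k ∈ Iic d, (m.choose k : ℝ) ≤ (Real.exp 1 * m / d) ^ d := by
  rcases d.eq_zero_or_pos with rfl | hd
  · rw [show Iic 0 = {0} from rfl]; simp
  have hm : 0 < m := hd.trans_le hdm
  set r : ℝ := d / m with hr
  have hr0 : 0 < r := by positivity
  have hr1 : r ≤ 1 := div_le_one_of_le₀ (by exact_mod_cast hdm) (by positivity)
  -- Weight the `k`-th term by `r ^ k ≥ r ^ d` and complete the binomial sum.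
  have key : (∑ k ∈ Iic d, (m.choose k : ℝ)) * r ^ d ≤ Real.exp 1 ^ d :=
    calc (∑ k ∈ Iic d, (m.choose k : ℝ)) * r ^ d
        ≤ ∑ k ∈ Iic d, (m.choose k : ℝ) * r ^ k := by
          rw [sum_mul]
          refine sum_le_sum fun k hk => mul_le_mul_of_nonneg_left ?_ (by positivity)
          exact pow_le_pow_of_le_one hr0.le hr1 (mem_Iic.1 hk)
      _ ≤ ∑ k ∈ range (m + 1), (m.choose k : ℝ) * r ^ k := by
          refine sum_le_sum_of_subset_of_nonneg (fun k hk => ?_) fun k _ _ => by positivity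
          simp only [mem_Iic, mem_range] at hk ⊢
          omega
      _ = (r + 1) ^ m := by rw [add_pow]; simp only [one_pow, mul_one, mul_comm]
      _ ≤ Real.exp r ^ m := by gcongr; exact Real.add_one_le_exp r
      _ = Real.exp 1 ^ d := by
          rw [← Real.exp_nat_mul, Real.exp_one_pow, hr]; field_simp
  calc ∑ k ∈ Iic d, (m.choose k : ℝ) ≤ Real.exp 1 ^ d / r ^ d := by
        rwa [le_div_iff₀ (by positivity)]
    _ = (Real.exp 1 * m / d) ^ d := by rw [hr, ← div_pow]; field_simp

lemma Finset.card_le_sum_choose_vcDim_of_subset {α : Type*} [DecidableEq α]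
    {𝒜 : Finset (Finset α)} {S : Finset α} (h𝒜 : ∀ A ∈ 𝒜, A ⊆ S) :
    #𝒜 ≤ ∑ k ∈ Iic 𝒜.vcDim, (#S).choose k := by
  calc #𝒜 ≤ #𝒜.shatterer := card_le_card_shatterer 𝒜
    _ ≤ #((Iic 𝒜.vcDim).biUnion S.powersetCard) := by
        refine card_le_card fun s hs => ?_
        have hs := mem_shatterer.1 hs
        obtain ⟨A, hA, hsA⟩ := hs.exists_superset
        exact mem_biUnion.2 ⟨#s, mem_Iic.2 hs.card_le_vcDim,
          mem_powersetCard.2 ⟨hsA.trans (h𝒜 A hA), rfl⟩⟩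
    _ ≤ ∑ k ∈ Iic 𝒜.vcDim, #(S.powersetCard k) := card_biUnion_le
    _ = ∑ k ∈ Iic 𝒜.vcDim, (#S).choose k := by simp only [card_powersetCard]

section traceFamily

variable {β : Type*} (P : Set (β → Bool)) (S : Finset β)

open Classical in
noncomputable def traceFamily : Finset (Finset β) :=
  S.powerset.filter fun A => ∃ π ∈ P, A = S.filter (π · = true)

variable {P S}

lemma mem_traceFamily {A : Finset β} :
    A ∈ traceFamily P S ↔ ∃ π ∈ P, A = S.filter (π · = true) := by
  classical
  simp only [traceFamily, mem_filter, mem_powerset, and_iff_right_iff_imp]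
  rintro ⟨π, -, rfl⟩
  exact filter_subset _ _

lemma filter_mem_traceFamily {π : β → Bool} (hπ : π ∈ P) :
    S.filter (π · = true) ∈ traceFamily P S :=
  mem_traceFamily.2 ⟨π, hπ, rfl⟩

lemma subset_of_mem_traceFamily {A : Finset β} (hA : A ∈ traceFamily P S) : A ⊆ S := by
  obtain ⟨π, -, rfl⟩ := mem_traceFamily.1 hA
  exact filter_subset _ _

end traceFamily

section ListPolicies

variable {O : Type*} {P : Set (List O → Bool)} {S : Finset (List O)}

lemma shattersLists_of_shatters_traceFamily [DecidableEq O] {T : Finset (List O)}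
    (hT : (traceFamily P S).Shatters T) : ShattersLists P T := by
  intro f
  obtain ⟨A, hA, hTA⟩ := hT (filter_subset (f · = true) T)
  obtain ⟨π, hπ, rfl⟩ := mem_traceFamily.1 hA
  have hTS : T ⊆ S := by
    obtain ⟨B, hB, hTB⟩ := hT.exists_superset
    exact hTB.trans (subset_of_mem_traceFamily hB)
  refine ⟨π, hπ, fun l hl => Bool.eq_iff_iff.2 ?_⟩
  simpa [hl, hTS hl] using congrArg (l ∈ ·) hTA

lemma vcDim_traceFamily_le [DecidableEq O] {d : ℕ}
    (hVC : ∀ T : Finset (List O), #T = d + 1 → ¬ ShattersLists P T) :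
    (traceFamily P S).vcDim ≤ d := by
  refine Finset.sup_le fun T hT => ?_
  by_contra! hdT
  obtain ⟨T', hT'T, hT'⟩ := exists_subset_card_eq (s := T) hdT
  exact hVC T' hT' (shattersLists_of_shatters_traceFamily
    ((mem_shatterer.1 hT).mono_right hT'T))

lemma card_traceFamily_le {d : ℕ}
    (hVC : ∀ T : Finset (List O), #T = d + 1 → ¬ ShattersLists P T) :
    #(traceFamily P S) ≤ ∑ k ∈ Iic d, (#S).choose k := by
  classical
  calc #(traceFamily P S) ≤ ∑ k ∈ Iic (traceFamily P S).vcDim, (#S).choose k :=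
        card_le_sum_choose_vcDim_of_subset fun _ => subset_of_mem_traceFamily
    _ ≤ ∑ k ∈ Iic d, (#S).choose k :=
        sum_le_sum_of_subset (Iic_subset_Iic.2 (vcDim_traceFamily_le hVC))

def trajPrefixes [DecidableEq O] {H : ℕ} (x : Fin H → O) : Finset (List O) :=
  univ.image fun t : Fin H => trajPrefix x (t + 1)

lemma trajPrefix_mem_trajPrefixes [DecidableEq O] {H t : ℕ} (x : Fin H → O) (ht₀ : 1 ≤ t)
    (htH : t ≤ H) :
    trajPrefix x t ∈ trajPrefixes x :=
  mem_image.2 ⟨⟨t - 1, by omega⟩, mem_univ _, by simp only [Nat.sub_add_cancel ht₀]⟩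

lemma card_trajPrefixes_le [DecidableEq O] {H : ℕ} (x : Fin H → O) : #(trajPrefixes x) ≤ H :=
  card_image_le.trans (card_fin H).le

lemma stopTime_congr {H : ℕ} {π₁ π₂ : List O → Bool} {x : Fin H → O}
    (h : ∀ t, 1 ≤ t → t ≤ H → π₁ (trajPrefix x t) = π₂ (trajPrefix x t)) :
    stopTime H π₁ x = stopTime H π₂ x := by
  have hiff : ∀ t, ((1 ≤ t ∧ t ≤ H) ∧ π₁ (trajPrefix x t) = true) ↔
      ((1 ≤ t ∧ t ≤ H) ∧ π₂ (trajPrefix x t) = true) := fun t =>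
    and_congr_right fun ht => by rw [h t ht.1 ht.2]
  unfold stopTime
  by_cases hex : ∃ t, (1 ≤ t ∧ t ≤ H) ∧ π₁ (trajPrefix x t) = true
  · rw [dif_pos hex, dif_pos ((exists_congr hiff).1 hex)]
    exact Nat.find_congr' (hiff _)
  · rw [dif_neg hex, dif_neg (mt (exists_congr hiff).2 hex)]

lemma ncard_stopTime_vectors_le_card_traceFamily [DecidableEq O] {n H : ℕ}
    (x : Fin n → Fin H → O) (hS : ∀ i, trajPrefixes (x i) ⊆ S) :
    {v : Fin n → ℕ | ∃ π ∈ P, v = fun i => stopTime H π (x i)}.ncard ≤ #(traceFamily P S) := by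
  have hsub : {v : Fin n → ℕ | ∃ π ∈ P, v = fun i => stopTime H π (x i)} ⊆
      (fun A : Finset (List O) => fun i => stopTime H (· ∈ A) (x i)) '' ↑(traceFamily P S) := by
    rintro v ⟨π, hπ, rfl⟩
    refine ⟨_, filter_mem_traceFamily hπ, funext fun i => stopTime_congr fun t ht₀ htH => ?_⟩
    simp [hS i (trajPrefix_mem_trajPrefixes (x i) ht₀ htH)]
  calc _ ≤ _ := Set.ncard_le_ncard hsub ((traceFamily P S).finite_toSet.image _)
    _ ≤ _ := Set.ncard_image_le (traceFamily P S).finite_toSet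
    _ = _ := Set.ncard_coe_finset _

end ListPolicies

theorem stopTime_vectors_card_le_general {O : Type*} {H n d : ℕ}
    (P : Set (List O → Bool))
    (hVC : ∀ S : Finset (List O), S.card = d + 1 → ¬ ShattersLists P S)
    (x : Fin n → (Fin H → O)) (hnH : d ≤ n * H) :
    ((Set.ncard {v : Fin n → ℕ | ∃ π ∈ P, v = fun i => stopTime H π (x i)} : ℝ))
      ≤ (Real.exp 1 * n * H / d) ^ d := by
  classical
  set S := univ.biUnion fun i => trajPrefixes (x i)
  have hS : #S ≤ n * H := card_biUnion_le.trans <| by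
    simpa using sum_le_sum fun i (_ : i ∈ univ) => card_trajPrefixes_le (x i)
  have hcount : {v : Fin n → ℕ | ∃ π ∈ P, v = fun i => stopTime H π (x i)}.ncard ≤
      ∑ k ∈ Iic d, (n * H).choose k :=
    calc _ ≤ #(traceFamily P S) := ncard_stopTime_vectors_le_card_traceFamily x
          fun i => subset_biUnion_of_mem (fun i => trajPrefixes (x i)) (mem_univ i)
      _ ≤ ∑ k ∈ Iic d, (#S).choose k := card_traceFamily_le hVC
      _ ≤ _ := sum_le_sum fun k _ => Nat.choose_le_choose k hS
  calc _ ≤ ∑ k ∈ Iic d, ((n * H).choose k : ℝ) := by exact_mod_cast hcount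
    _ ≤ (Real.exp 1 * (n * H : ℕ) / d) ^ d := sum_choose_le_exp_one_mul_div_pow hnH
    _ = (Real.exp 1 * n * H / d) ^ d := by push_cast; ring

/-- The number of distinct stopping-time vectors produced by a VC-dimension-`d` policy class
on `n` full trajectories of horizon `H` is at most `(e·n·H/d)^d`. -/
theorem stopTime_vectors_card_le {O : Type*} {H n d : ℕ} (hH : 1 ≤ H) (hd : 1 ≤ d)
    (P : Set (List O → Bool))
    (hVC : ∀ S : Finset (List O), S.card = d + 1 → ¬ ShattersLists P S)
    (x : Fin n → (Fin H → O)) (hnH : d ≤ n * H) :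
    ((Set.ncard {v : Fin n → ℕ | ∃ π ∈ P, v = fun i => stopTime H π (x i)} : ℝ))
      ≤ (Real.exp 1 * n * H / d) ^ d :=
  stopTime_vectors_card_le_general P hVC x hnH
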